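/- arXiv:1304.2260 — 2 statements merged into one kernel-verified Lean document; each statement's English description precedes it below -/
import Mathlib

section
/- For every integer k ≥ 2 and every real x, k·x^{k-2} - (k-1)·x^{k-1} - (2 - x) + ((k² - k - 2)/2)·(1-x)² = ∑_{i=2}^{k-1} i·(1-x)²·(1 - x^{i-2}); consequently, for every x ∈ [0,1] and every probability mass function (p_k)_{k≥2} on the integers k ≥ 2 with ∑_{k≥2} k²·p_k < ∞, we have ∑_{k≥2} p_k·(k·x^{k-2} - (k-1)·x^{k-1}) ≥ 2 - x - ((∑_{k≥2} k(k-1)·p_k - 2)/2)·(1-x)². -/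
lemma aux_identity : ∀ k : ℕ, 2 ≤ k → ∀ x : ℝ,
    (k : ℝ) * x ^ (k - 2) - ((k : ℝ) - 1) * x ^ (k - 1) - (2 - x)
        + (((k : ℝ) ^ 2 - (k : ℝ) - 2) / 2) * (1 - x) ^ 2
      = ∑ i ∈ Finset.Icc 2 (k - 1), (i : ℝ) * (1 - x) ^ 2 * (1 - x ^ (i - 2)) := by
  intro k hk x
  obtain ⟨m, rfl⟩ := Nat.exists_eq_add_of_le hk
  have h2 : 2 + m - 2 = m := by omega
  have h1 : 2 + m - 1 = m + 1 := by omega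
  rw [h2, h1]
  induction m with
  | zero => simp; ring
  | succ n ih =>
    rw [Finset.sum_Icc_succ_top (by omega : 2 ≤ n + 2), ← ih (by omega) (by omega) (by omega)]
    have : n + 2 - 2 = n := by omega
    rw [this]
    push_cast
    ring


/-- For every integer `k ≥ 2` and real `x`,
`g_k^2(x) - (2-x) + ((k²-k-2)/2)(1-x)² = ∑_{i=2}^{k-1} i (1-x)² (1-x^(i-2))`
(where `g_k^2(x) = k x^(k-2) - (k-1) x^(k-1)`); consequently, for every `x ∈ [0,1]` and
every offspring distribution `(p_k)_{k≥2}` with finite second moment,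
`∑_{k≥2} p_k g_k^2(x) ≥ 2 - x - ((∑ k(k-1) p_k - 2)/2)(1-x)²`. -/
theorem g_two_taylor_identity_and_bound :
    (∀ k : ℕ, 2 ≤ k → ∀ x : ℝ,
        (k : ℝ) * x ^ (k - 2) - ((k : ℝ) - 1) * x ^ (k - 1) - (2 - x)
            + (((k : ℝ) ^ 2 - (k : ℝ) - 2) / 2) * (1 - x) ^ 2
          = ∑ i ∈ Finset.Icc 2 (k - 1), (i : ℝ) * (1 - x) ^ 2 * (1 - x ^ (i - 2))) ∧
      (∀ x ∈ Set.Icc (0 : ℝ) 1, ∀ p : ℕ → ℝ,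
        (∀ k, k < 2 → p k = 0) → (∀ k, 0 ≤ p k) → (∑' k : ℕ, p k = 1) →
        (Summable fun k : ℕ => (k : ℝ) ^ 2 * p k) →
        2 - x - ((∑' k : ℕ, (k : ℝ) * ((k : ℝ) - 1) * p k - 2) / 2) * (1 - x) ^ 2 ≤
          ∑' k : ℕ, p k * ((k : ℝ) * x ^ (k - 2) - ((k : ℝ) - 1) * x ^ (k - 1))) := by
  refine ⟨aux_identity, ?_⟩
  rintro x ⟨hx0, hx1⟩ p hp0 hpnn hp1 hsum2
  set f : ℕ → ℝ := fun k => p k * ((k : ℝ) * x ^ (k - 2) - ((k : ℝ) - 1) * x ^ (k - 1)) with hf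
  set h : ℕ → ℝ := fun k =>
    p k * (2 - x) - p k * (((k : ℝ) ^ 2 - (k : ℝ) - 2) / 2) * (1 - x) ^ 2 with hh
  -- summability of p
  have hsp : Summable p := by
    by_contra hc
    rw [tsum_eq_zero_of_not_summable hc] at hp1
    norm_num at hp1
  -- g_k bounds for k ≥ 2
  have hg : ∀ k : ℕ, 2 ≤ k →
      0 ≤ (k : ℝ) * x ^ (k - 2) - ((k : ℝ) - 1) * x ^ (k - 1) ∧
      (k : ℝ) * x ^ (k - 2) - ((k : ℝ) - 1) * x ^ (k - 1) ≤ (k : ℝ) ^ 2 := by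
    intro k hk
    have hk1 : k - 1 = (k - 2) + 1 := by omega
    have hx2 : (0:ℝ) ≤ x ^ (k - 2) := pow_nonneg hx0 _
    have hx3 : x ^ (k - 2) ≤ 1 := pow_le_one₀ hx0 hx1
    have hk2 : (2:ℝ) ≤ (k:ℝ) := by exact_mod_cast hk
    rw [hk1, pow_succ]
    have hA : (0:ℝ) ≤ (k:ℝ) - ((k:ℝ)-1)*x := by nlinarith
    constructor
    · nlinarith [mul_nonneg hx2 hA]
    · nlinarith [mul_nonneg (mul_nonneg (show (0:ℝ) ≤ (k:ℝ)-1 by linarith) hx2) hx0,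
        mul_nonneg (show (0:ℝ) ≤ (k:ℝ) by linarith) (show (0:ℝ) ≤ 1 - x ^ (k-2) by linarith)]
  -- pointwise bounds for f
  have hfb : ∀ k : ℕ, 0 ≤ f k ∧ f k ≤ (k : ℝ) ^ 2 * p k := by
    intro k
    by_cases hk : 2 ≤ k
    · obtain ⟨hg0, hg1⟩ := hg k hk
      constructor
      · exact mul_nonneg (hpnn k) hg0
      · calc f k ≤ p k * (k:ℝ)^2 := mul_le_mul_of_nonneg_left hg1 (hpnn k)
          _ = (k:ℝ)^2 * p k := mul_comm _ _
    · have := hp0 k (by omega)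
      simp [hf, this]
  have hsf : Summable f :=
    Summable.of_nonneg_of_le (fun k => (hfb k).1) (fun k => (hfb k).2) hsum2
  -- summability of k(k-1)p and (k²-k-2)p
  have hskk : Summable (fun k : ℕ => (k : ℝ) * ((k : ℝ) - 1) * p k) := by
    apply Summable.of_nonneg_of_le (fun k => ?_) (fun k => ?_) hsum2
    · rcases Nat.eq_zero_or_pos k with h0 | h0
      · simp [h0]
      · have h1 : (1:ℝ) ≤ (k:ℝ) := by exact_mod_cast h0
        exact mul_nonneg (mul_nonneg (by positivity) (by linarith)) (hpnn k)
    · have := hpnn k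
      have : (k:ℝ) * ((k:ℝ) - 1) ≤ (k:ℝ)^2 := by nlinarith [Nat.cast_nonneg (α := ℝ) k]
      nlinarith [hpnn k]
  have hsh : Summable h := by
    apply Summable.sub (hsp.mul_right _)
    have : (fun k : ℕ => p k * (((k : ℝ) ^ 2 - (k : ℝ) - 2) / 2) * (1 - x) ^ 2)
        = fun k : ℕ => ((k : ℝ) * ((k : ℝ) - 1) * p k - 2 * p k) * ((1 - x) ^ 2 / 2) := by
      funext k; ring
    rw [this]
    exact (hskk.sub (hsp.mul_left 2)).mul_right _
  -- pointwise h ≤ f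
  have hhf : ∀ k, h k ≤ f k := by
    intro k
    by_cases hk : 2 ≤ k
    · have key := aux_identity k hk x
      have hsum_nn : 0 ≤ ∑ i ∈ Finset.Icc 2 (k - 1), (i : ℝ) * (1 - x) ^ 2 * (1 - x ^ (i - 2)) := by
        apply Finset.sum_nonneg
        intro i _
        have h1 : x ^ (i - 2) ≤ 1 := pow_le_one₀ hx0 hx1
        exact mul_nonneg (mul_nonneg (Nat.cast_nonneg i) (sq_nonneg _)) (by linarith)
      have hge : 2 - x - (((k : ℝ) ^ 2 - (k : ℝ) - 2) / 2) * (1 - x) ^ 2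
          ≤ (k : ℝ) * x ^ (k - 2) - ((k : ℝ) - 1) * x ^ (k - 1) := by linarith
      have := mul_le_mul_of_nonneg_left hge (hpnn k)
      simp only [hf, hh]
      nlinarith [hpnn k]
    · have := hp0 k (by omega)
      simp [hf, hh, this]
  have hmain := Summable.tsum_le_tsum hhf hsh hsf
  -- compute tsum h
  have htsum_h : ∑' k, h k =
      2 - x - ((∑' k : ℕ, (k : ℝ) * ((k : ℝ) - 1) * p k - 2) / 2) * (1 - x) ^ 2 := by
    have e1 : (fun k : ℕ => p k * (((k : ℝ) ^ 2 - (k : ℝ) - 2) / 2) * (1 - x) ^ 2)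
        = fun k : ℕ => ((k : ℝ) * ((k : ℝ) - 1) * p k - 2 * p k) * ((1 - x) ^ 2 / 2) := by
      funext k; ring
    rw [hh]
    rw [Summable.tsum_sub (hsp.mul_right _) (by rw [e1]; exact (hskk.sub (hsp.mul_left 2)).mul_right _)]
    rw [e1, tsum_mul_right, tsum_mul_right,
      Summable.tsum_sub hskk (hsp.mul_left 2), tsum_mul_left, hp1]
    ring
  rw [htsum_h] at hmain
  exact hmain
end

section
/- Let b > 2 be a real number and define the shifted geometric probability mass function p_k = (1/(b-1))·((b-2)/(b-1))^{k-2} for integers k ≥ 2 (so ∑_{k≥2} p_k = 1 and ∑_{k≥2} k·p_k = b). Then: (i) for every x ∈ [0,1], ∑_{k≥2} p_k·(k·x^{k-2} - (k-1)·x^{k-1}) = (2(b-1) - (2b-3)x)/((b-1) - (b-2)x)²; and (ii) if b ≥ 5/2, then max_{x∈[0,1]} (2(b-1) - (2b-3)x)/((b-1) - (b-2)x)² = (2b-3)²/(4(b-1)(b-2)), attained at x = (2b-5)(b-1)/((b-2)(2b-3)), so that 1 - 1/(max_{x∈[0,1]} G(x)) = 1/(2b-3)². -/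
/-!
With `r = (b - 2) / (b - 1)` the distribution is `p (n + 2) = (1 - r) rⁿ`, and every series in
question is a combination of `∑ tⁿ` and `∑ (n + 2) tⁿ = (2 - t) / (1 - t)²` at `t = r` or
`t = r x`. In the variable `u = 1 / ((b - 1) - (b - 2) x)` the closed form of `G` is the concave
quadratic `((2b - 3) u - (b - 1) u²) / (b - 2)`, whose maximum `(2b - 3)² / (4 (b - 1) (b - 2))`
is attained at `u = (2b - 3) / (2 (b - 1))`; `b ≥ 5/2` is what puts the corresponding `x`
into `[0, 1]`.
-/

theorem HasSum.of_add_two {M : Type*} [AddCommMonoid M] [TopologicalSpace M] {f : ℕ → M}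
    {a : M} (h0 : f 0 = 0) (h1 : f 1 = 0) (h : HasSum (fun n ↦ f (n + 2)) a) : HasSum f a := by
  refine ((add_left_injective 2).hasSum_iff fun k hk ↦ ?_).mp h
  obtain _ | _ | k := k
  exacts [h0, h1, (hk ⟨k, rfl⟩).elim]

theorem hasSum_add_two_mul_geometric {𝕜 : Type*} [NormedField 𝕜] {t : 𝕜} (ht : ‖t‖ < 1) :
    HasSum (fun n : ℕ ↦ ((n : 𝕜) + 2) * t ^ n) ((2 - t) / (1 - t) ^ 2) := by
  have ht1 : 1 - t ≠ 0 := sub_ne_zero.mpr fun h ↦ by simp [← h] at ht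
  have hv : (2 - t) / (1 - t) ^ 2 = t / (1 - t) ^ 2 + 2 * (1 - t)⁻¹ := by field_simp; ring
  simp only [hv, add_mul]
  exact (hasSum_coe_mul_geometric_of_norm_lt_one ht).add
    ((hasSum_geometric_of_norm_lt_one ht).mul_left 2)

def shiftedGeometric (r : ℝ) (k : ℕ) : ℝ := if 2 ≤ k then (1 - r) * r ^ (k - 2) else 0

namespace shiftedGeometric

variable {r : ℝ}

@[simp] theorem apply_zero : shiftedGeometric r 0 = 0 := rfl
@[simp] theorem apply_one : shiftedGeometric r 1 = 0 := rfl
@[simp] theorem apply_add_two (n : ℕ) : shiftedGeometric r (n + 2) = (1 - r) * r ^ n := by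
  simp [shiftedGeometric]

theorem hasSum (hr : |r| < 1) : HasSum (shiftedGeometric r) 1 := by
  have hr1 : 1 - r ≠ 0 := by linarith [abs_lt.mp hr]
  refine .of_add_two apply_zero apply_one ?_
  simpa [hr1] using (hasSum_geometric_of_abs_lt_one hr).mul_left (1 - r)

theorem hasSum_coe_mul (hr : |r| < 1) :
    HasSum (fun k : ℕ ↦ k * shiftedGeometric r k) ((2 - r) / (1 - r)) := by
  have hr1 : 1 - r ≠ 0 := by linarith [abs_lt.mp hr]
  have hv : (2 - r) / (1 - r) = (1 - r) * ((2 - r) / (1 - r) ^ 2) := by field_simp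
  refine .of_add_two (by simp) (by simp) ?_
  rw [hv]
  refine ((hasSum_add_two_mul_geometric (𝕜 := ℝ) hr).mul_left (1 - r)).congr_fun fun n ↦ ?_
  push_cast
  rw [apply_add_two]; ring

theorem hasSum_bootstrapG {x : ℝ} (hrx : |r * x| < 1) :
    HasSum (fun k : ℕ ↦ shiftedGeometric r k * (k * x ^ (k - 2) - (k - 1) * x ^ (k - 1)))
      ((1 - r) * (2 - x - r * x) / (1 - r * x) ^ 2) := by
  have hrx1 : 1 - r * x ≠ 0 := by linarith [abs_lt.mp hrx]
  have hv : (1 - r) * (2 - x - r * x) / (1 - r * x) ^ 2 =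
      (1 - r) * ((1 - x) * ((2 - r * x) / (1 - r * x) ^ 2) + x * (1 - r * x)⁻¹) := by
    field_simp; ring
  refine .of_add_two (by simp) (by simp) ?_
  rw [hv]
  -- `(n + 2) xⁿ - (n + 1) xⁿ⁺¹ = (1 - x) (n + 2) xⁿ + x ⋅ xⁿ`
  refine ((((hasSum_add_two_mul_geometric (𝕜 := ℝ) hrx).mul_left (1 - x)).add
    ((hasSum_geometric_of_abs_lt_one hrx).mul_left x)).mul_left (1 - r)).congr_fun fun n ↦ ?_
  rw [apply_add_two, Nat.add_sub_cancel, show n + 2 - 1 = n + 1 from rfl, mul_pow]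
  push_cast; ring

end shiftedGeometric

/-- `G` of the shifted geometric distribution of mean `b`, in closed form. -/
noncomputable def shiftedGeometricG (b x : ℝ) : ℝ :=
  (2 * (b - 1) - (2 * b - 3) * x) / ((b - 1) - (b - 2) * x) ^ 2

section ShiftedGeometricG

variable {b : ℝ}

theorem shiftedGeometricG_eq (hb : b ≠ 1) (x : ℝ) :
    shiftedGeometricG b x = (1 - (b - 2) / (b - 1)) * (2 - x - (b - 2) / (b - 1) * x) /
      (1 - (b - 2) / (b - 1) * x) ^ 2 := by
  have hb1 : b - 1 ≠ 0 := sub_ne_zero.mpr hb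
  unfold shiftedGeometricG
  field_simp
  ring

theorem shiftedGeometricG_max_sub {x : ℝ} (hb : 2 < b) (hD : (b - 1) - (b - 2) * x ≠ 0) :
    (2 * b - 3) ^ 2 / (4 * (b - 1) * (b - 2)) - shiftedGeometricG b x =
      (b - 1) / (b - 2) * (((b - 1) - (b - 2) * x)⁻¹ - (2 * b - 3) / (2 * (b - 1))) ^ 2 := by
  have hb1 : b - 1 ≠ 0 := by linarith
  have hb2 : b - 2 ≠ 0 := by linarith
  unfold shiftedGeometricG
  field_simp
  ring

theorem shiftedGeometricG_le (hb : 2 < b) (x : ℝ) :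
    shiftedGeometricG b x ≤ (2 * b - 3) ^ 2 / (4 * (b - 1) * (b - 2)) := by
  have hb1 : 0 < b - 1 := by linarith
  have hb2 : 0 < b - 2 := by linarith
  by_cases hD : (b - 1) - (b - 2) * x = 0
  · rw [shiftedGeometricG, hD, zero_pow two_ne_zero, div_zero]
    positivity
  · rw [← sub_nonneg, shiftedGeometricG_max_sub hb hD]
    positivity

theorem shiftedGeometricG_argmax (hb : 2 < b) :
    shiftedGeometricG b ((2 * b - 5) * (b - 1) / ((b - 2) * (2 * b - 3))) =
      (2 * b - 3) ^ 2 / (4 * (b - 1) * (b - 2)) := by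
  have hb1 : b - 1 ≠ 0 := by linarith
  have hb2 : b - 2 ≠ 0 := by linarith
  have hb3 : 2 * b - 3 ≠ 0 := by linarith
  have hD : (b - 1) - (b - 2) * ((2 * b - 5) * (b - 1) / ((b - 2) * (2 * b - 3))) =
      2 * (b - 1) / (2 * b - 3) := by
    rw [mul_div_assoc', mul_div_mul_left _ _ hb2, eq_div_iff hb3, sub_mul,
      div_mul_cancel₀ _ hb3]
    ring
  rw [shiftedGeometricG, hD]
  field_simp
  ring

theorem shiftedGeometricG_argmax_mem_Icc (hb : 5 / 2 ≤ b) :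
    (2 * b - 5) * (b - 1) / ((b - 2) * (2 * b - 3)) ∈ Set.Icc (0 : ℝ) 1 := by
  have hden : 0 < (b - 2) * (2 * b - 3) := by nlinarith
  refine ⟨div_nonneg (by nlinarith) hden.le, (div_le_one hden).mpr (by nlinarith)⟩

theorem one_sub_one_div_shiftedGeometricG_max (hb : 2 < b) :
    1 - 1 / ((2 * b - 3) ^ 2 / (4 * (b - 1) * (b - 2))) = 1 / (2 * b - 3) ^ 2 := by
  have hb1 : b - 1 ≠ 0 := by linarith
  have hb2 : b - 2 ≠ 0 := by linarith
  have hb3 : 2 * b - 3 ≠ 0 := by linarith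
  field_simp
  ring

end ShiftedGeometricG

/-- For real `b > 2`, the shifted geometric offspring distribution
`p_k = (1/(b-1))·((b-2)/(b-1))^(k-2)` for `k ≥ 2` is a probability mass function with mean
`b`; its associated function `G(x) = ∑_{k≥2} p_k (k x^(k-2) - (k-1) x^(k-1))` equals
`(2(b-1) - (2b-3)x)/((b-1)-(b-2)x)²` on `[0,1]`, and if `b ≥ 5/2` this is maximized over
`[0,1]` at `x = (2b-5)(b-1)/((b-2)(2b-3))` with maximum value `(2b-3)²/(4(b-1)(b-2))`, so
that the critical probability `1 - 1/(max G)` equals `1/(2b-3)²`. -/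
theorem shifted_geometric_pc (b : ℝ) (hb : 2 < b) (p : ℕ → ℝ)
    (hp : ∀ k : ℕ, p k = if 2 ≤ k then (1 / (b - 1)) * ((b - 2) / (b - 1)) ^ (k - 2) else 0) :
    (∑' k : ℕ, p k = 1) ∧ (∑' k : ℕ, (k : ℝ) * p k = b) ∧
      (∀ x ∈ Set.Icc (0 : ℝ) 1,
        ∑' k : ℕ, p k * ((k : ℝ) * x ^ (k - 2) - ((k : ℝ) - 1) * x ^ (k - 1))
          = (2 * (b - 1) - (2 * b - 3) * x) / ((b - 1) - (b - 2) * x) ^ 2) ∧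
      (5 / 2 ≤ b →
        (2 * b - 5) * (b - 1) / ((b - 2) * (2 * b - 3)) ∈ Set.Icc (0 : ℝ) 1 ∧
        (∀ x ∈ Set.Icc (0 : ℝ) 1,
          (2 * (b - 1) - (2 * b - 3) * x) / ((b - 1) - (b - 2) * x) ^ 2 ≤
            (2 * b - 3) ^ 2 / (4 * (b - 1) * (b - 2))) ∧
        (2 * (b - 1) - (2 * b - 3) * ((2 * b - 5) * (b - 1) / ((b - 2) * (2 * b - 3)))) /
            ((b - 1) - (b - 2) * ((2 * b - 5) * (b - 1) / ((b - 2) * (2 * b - 3)))) ^ 2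
          = (2 * b - 3) ^ 2 / (4 * (b - 1) * (b - 2)) ∧
        1 - 1 / ((2 * b - 3) ^ 2 / (4 * (b - 1) * (b - 2))) = 1 / (2 * b - 3) ^ 2) := by
  have hb1 : b ≠ 1 := by linarith
  set r := (b - 2) / (b - 1) with hr_def
  have hr0 : 0 ≤ r := div_nonneg (by linarith) (by linarith)
  have hr1 : r < 1 := (div_lt_one (by linarith)).mpr (by linarith)
  have hr : |r| < 1 := abs_lt.mpr ⟨by linarith, hr1⟩
  have h1r : 1 - r = 1 / (b - 1) := by rw [hr_def]; field_simp; ring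
  obtain rfl : p = shiftedGeometric r := funext fun k ↦ by rw [hp, shiftedGeometric, h1r]
  refine ⟨(shiftedGeometric.hasSum hr).tsum_eq, ?_, fun x hx ↦ ?_,
    fun hb5 ↦ ⟨shiftedGeometricG_argmax_mem_Icc hb5, fun x _ ↦ shiftedGeometricG_le hb x,
      shiftedGeometricG_argmax hb, one_sub_one_div_shiftedGeometricG_max hb⟩⟩
  · refine (shiftedGeometric.hasSum_coe_mul hr).tsum_eq.trans ?_
    rw [h1r, hr_def]
    field_simp
    ring
  · have hrx : |r * x| < 1 := by
      rw [abs_of_nonneg (mul_nonneg hr0 hx.1)]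
      exact (mul_le_of_le_one_right hr0 hx.2).trans_lt hr1
    exact (shiftedGeometric.hasSum_bootstrapG hrx).tsum_eq.trans
      (shiftedGeometricG_eq hb1 x).symm
end
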